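/- arXiv:2301.13737 — 2 statements merged into one kernel-verified Lean document; each statement's English description precedes it below -/
import Mathlib

section
/- Let p : ℝ^d → ℝ be a continuously differentiable probability density with p(x) > 0 for every x, and let v : ℝ^d → ℝ^d be a bounded continuously differentiable vector field. Assume the vector field F(x) := p(x) v(x) is integrable, div F is integrable, F(x) → 0 as ‖x‖ → ∞, and both x ↦ v(x)·∇log p(x) · p(x) and x ↦ div v(x) · p(x) are integrable. Then ∫_{ℝ^d} v(x)·∇log p(x) · p(x) dx = − ∫_{ℝ^d} div v(x) · p(x) dx. -/
/-!
Since `p > 0`, the integrand on the left is `v · ∇p`, so the identity says that the divergence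
`div (p v) = v · ∇p + p div v` integrates to zero. For an integrable differentiable field `F` with
integrable divergence this follows from the divergence theorem on the cubes `[-R, R]^d`: the
boundary term is bounded by the `L¹` masses of `F` on the hyperplanes `x_i = ±R`, which are
integrable in `R` by Fubini, hence small along some sequence `R → ∞`.
-/

open MeasureTheory Filter

/-- Divergence of a vector field on `ℝ^d`: the sum of the partial derivatives
`∂F_i/∂x_i`, i.e. the trace of the Jacobian. -/
noncomputable def vdiv {d : ℕ} (F : (Fin d → ℝ) → (Fin d → ℝ)) (x : Fin d → ℝ) : ℝ :=
  ∑ i, fderiv ℝ F x (Pi.single i 1) i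

/-- The `i`-th component of the gradient of a scalar function on `ℝ^d`. -/
noncomputable def grad {d : ℕ} (p : (Fin d → ℝ) → ℝ) (x : Fin d → ℝ) (i : Fin d) : ℝ :=
  fderiv ℝ p x (Pi.single i 1)

open Set
open scoped ENNReal

theorem measurable_insertNth_uncurry {E : Type*} [MeasurableSpace E] {n : ℕ} (i : Fin (n + 1)) :
    Measurable fun z : E × (Fin n → E) => Fin.insertNth (α := fun _ => E) i z.1 z.2 :=
  (MeasurableEquiv.piFinSuccAbove (fun _ => E) i).symm.measurable

theorem lintegral_lintegral_insertNth {E : Type*} [MeasureSpace E]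
    [SigmaFinite (volume : Measure E)] {n : ℕ} (i : Fin (n + 1)) {f : (Fin (n + 1) → E) → ℝ≥0∞}
    (hf : Measurable f) : ∫⁻ t, ∫⁻ y, f (i.insertNth t y) = ∫⁻ x, f x := by
  have hmp := (volume_preserving_piFinSuccAbove (fun _ : Fin (n + 1) => E) i).symm
  rw [← hmp.lintegral_comp hf, Measure.volume_eq_prod]
  exact (lintegral_prod _ (hf.comp hmp.measurable).aemeasurable).symm

theorem frequently_lt_of_lintegral_ne_top {g : ℝ → ℝ≥0∞} (hg : ∫⁻ t, g t ≠ ∞) {ε : ℝ≥0∞}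
    (hε : 0 < ε) : ∃ᶠ t in atTop, g t < ε := by
  refine frequently_atTop.2 fun T => ?_
  by_contra! h
  have hle : ∫⁻ _ in Ici T, ε ≤ ∫⁻ t in Ici T, g t := setLIntegral_mono' measurableSet_Ici h
  rw [setLIntegral_const, Real.volume_Ici, ENNReal.mul_top hε.ne'] at hle
  exact hg (top_unique (hle.trans (setLIntegral_le_lintegral _ _)))

theorem aecover_Icc_neg_const {ι : Type*} [Fintype ι] (μ : Measure (ι → ℝ)) :
    AECover μ atTop fun R : ℝ => Icc (fun _ : ι => -R) (fun _ => R) where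
  measurableSet _ := measurableSet_Icc
  ae_eventually_mem := ae_of_all _ fun x => (eventually_ge_atTop ‖x‖).mono fun _ hR =>
    ⟨fun i => (abs_le.1 ((norm_le_pi_norm x i).trans hR)).1,
      fun i => (abs_le.1 ((norm_le_pi_norm x i).trans hR)).2⟩

section SliceMass

variable {n : ℕ} {G : Type*} [NormedAddCommGroup G] [MeasurableSpace G] [OpensMeasurableSpace G]

noncomputable def sliceMass (F : (Fin (n + 1) → ℝ) → G) (i : Fin (n + 1)) (t : ℝ) : ℝ≥0∞ :=
  ∫⁻ y, ‖F (i.insertNth t y)‖ₑ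

theorem measurable_sliceMass {F : (Fin (n + 1) → ℝ) → G} (hF : Measurable F) (i : Fin (n + 1)) :
    Measurable (sliceMass F i) :=
  (hF.comp (measurable_insertNth_uncurry i)).enorm.lintegral_prod_right'

theorem lintegral_sliceMass {F : (Fin (n + 1) → ℝ) → G} (hF : Measurable F) (i : Fin (n + 1)) :
    ∫⁻ t, sliceMass F i t = ∫⁻ x, ‖F x‖ₑ :=
  lintegral_lintegral_insertNth i hF.enorm

theorem frequently_sliceMass_lt {F : (Fin (n + 1) → ℝ) → G} (hFm : Measurable F)
    (hF : HasFiniteIntegral F) {ε : ℝ≥0∞} (hε : 0 < ε) :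
    ∃ᶠ R in atTop, ∑ i, (sliceMass F i R + sliceMass F i (-R)) < ε := by
  have hm i := measurable_sliceMass hFm i
  refine frequently_lt_of_lintegral_ne_top ?_ hε
  rw [lintegral_finsetSum (f := fun i t => sliceMass F i t + sliceMass F i (-t)) _
    fun i _ => (hm i).add ((hm i).comp measurable_neg)]
  refine (ENNReal.sum_lt_top.2 fun i _ => ?_).ne
  rw [lintegral_add_left (hm i), lintegral_neg_eq_self (sliceMass F i), lintegral_sliceMass hFm]
  exact ENNReal.add_lt_top.2 ⟨hF, hF⟩

theorem enorm_setIntegral_insertNth_le (F : (Fin (n + 1) → ℝ) → (Fin (n + 1) → ℝ))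
    (i j : Fin (n + 1)) (t : ℝ) (s : Set (Fin n → ℝ)) :
    ‖∫ y in s, F (i.insertNth t y) j‖ₑ ≤ sliceMass F i t :=
  (enorm_integral_le_lintegral_enorm _).trans <| (setLIntegral_le_lintegral _ _).trans <|
    lintegral_mono fun _ => ENNReal.coe_le_coe.2 (nnnorm_le_pi_nnnorm _ j)

end SliceMass

theorem enorm_setIntegral_Icc_vdiv_le {n : ℕ} {F : (Fin (n + 1) → ℝ) → (Fin (n + 1) → ℝ)}
    (hF : Differentiable ℝ F) {a b : Fin (n + 1) → ℝ} (hab : a ≤ b)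
    (hdiv : IntegrableOn (vdiv F) (Icc a b)) :
    ‖∫ x in Icc a b, vdiv F x‖ₑ ≤ ∑ i, (sliceMass F i (b i) + sliceMass F i (a i)) := by
  have hgauss := integral_divergence_of_hasFDerivAt_off_countable a b hab F (fderiv ℝ F) ∅
    countable_empty hF.continuous.continuousOn (fun x _ => (hF x).hasFDerivAt) hdiv
  simp only [vdiv, hgauss]
  exact (enorm_sum_le _ _).trans <| Finset.sum_le_sum fun i _ => enorm_sub_le.trans <|
    add_le_add (enorm_setIntegral_insertNth_le F i i _ _)
      (enorm_setIntegral_insertNth_le F i i _ _)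

theorem integral_vdiv_eq_zero {d : ℕ} {F : (Fin d → ℝ) → (Fin d → ℝ)} (hF : Differentiable ℝ F)
    (hFint : Integrable F) (hdiv : Integrable (vdiv F)) : ∫ x, vdiv F x = 0 := by
  cases d with
  | zero => simp [vdiv]
  | succ n =>
    have hlim := (aecover_Icc_neg_const (volume : Measure (Fin (n + 1) → ℝ))
      ).integral_tendsto_of_countably_generated hdiv
    refine enorm_eq_zero.1 <| nonpos_iff_eq_zero.1 <|
      forall_gt_imp_ge_iff_le_of_dense.1 fun ε hε => ?_
    refine (isClosed_le continuous_enorm continuous_const).mem_of_frequently_of_tendsto ?_ hlim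
    refine ((frequently_sliceMass_lt hF.continuous.measurable hFint.2 hε).and_eventually
      (eventually_ge_atTop 0)).mono fun R ⟨hsmall, hR⟩ => ?_
    exact (enorm_setIntegral_Icc_vdiv_le hF (fun _ => neg_le_self hR) hdiv.integrableOn).trans
      hsmall.le

theorem vdiv_smul {d : ℕ} {p : (Fin d → ℝ) → ℝ} {v : (Fin d → ℝ) → (Fin d → ℝ)} {x : Fin d → ℝ}
    (hp : DifferentiableAt ℝ p x) (hv : DifferentiableAt ℝ v x) :
    vdiv (fun y => p y • v y) x = p x * vdiv v x + ∑ i, grad p x i * v x i := by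
  simp [vdiv, grad, fderiv_fun_smul hp hv, Finset.mul_sum, Finset.sum_add_distrib, mul_comm]

theorem score_integration_by_parts_general {d : ℕ}
    (p : (Fin d → ℝ) → ℝ) (v : (Fin d → ℝ) → (Fin d → ℝ))
    -- `p` is a continuously differentiable probability density, positive everywhere
    (hp : ContDiff ℝ 1 p) (hppos : ∀ x, 0 < p x)
    -- `v` bounded and continuously differentiable
    (hv : ContDiff ℝ 1 v)
    -- the score `s = ∇log p = ∇p / p`
    (s : (Fin d → ℝ) → (Fin d → ℝ)) (hs : ∀ x i, s x i = grad p x i / p x)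
    -- `F(x) = p(x) v(x)` integrable, `div F` integrable, `F → 0` at infinity
    (hFint : Integrable fun x => p x • v x)
    (hdivFint : Integrable fun x => vdiv (fun y => p y • v y) x)
    -- integrability of both integrands
    (hint1 : Integrable fun x => (∑ i, v x i * s x i) * p x)
    (hint2 : Integrable fun x => vdiv v x * p x) :
    ∫ x, (∑ i, v x i * s x i) * p x = - ∫ x, vdiv v x * p x := by
  have hpd := hp.differentiable one_ne_zero
  have hvd := hv.differentiable one_ne_zero
  have hscore x : (∑ i, v x i * s x i) * p x = ∑ i, grad p x i * v x i := by
    rw [Finset.sum_mul]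
    refine Finset.sum_congr rfl fun i _ => ?_
    rw [hs]
    field_simp [(hppos x).ne']
  have hdivF x : vdiv (fun y => p y • v y) x = vdiv v x * p x + (∑ i, v x i * s x i) * p x := by
    rw [vdiv_smul (hpd x) (hvd x), hscore, mul_comm]
  have hzero := integral_vdiv_eq_zero (F := fun y => p y • v y) (hpd.smul hvd) hFint hdivFint
  simp only [hdivF, integral_add hint2 hint1] at hzero
  linarith

/-- **Score-matching integration-by-parts trick**:
`∫ v·∇log p · p = −∫ (div v) p` (the case `D = I` of Proposition 1). -/
theorem score_integration_by_parts {d : ℕ}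
    (p : (Fin d → ℝ) → ℝ) (v : (Fin d → ℝ) → (Fin d → ℝ))
    -- `p` is a continuously differentiable probability density, positive everywhere
    (hp : ContDiff ℝ 1 p) (hppos : ∀ x, 0 < p x) (hpprob : ∫ x, p x = 1)
    -- `v` bounded and continuously differentiable
    (hv : ContDiff ℝ 1 v) (hvbd : ∃ M, ∀ x, ‖v x‖ ≤ M)
    -- the score `s = ∇log p = ∇p / p`
    (s : (Fin d → ℝ) → (Fin d → ℝ)) (hs : ∀ x i, s x i = grad p x i / p x)
    -- `F(x) = p(x) v(x)` integrable, `div F` integrable, `F → 0` at infinity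
    (hFint : Integrable fun x => p x • v x)
    (hdivFint : Integrable fun x => vdiv (fun y => p y • v y) x)
    (hFzero : Tendsto (fun x => p x • v x) (cocompact (Fin d → ℝ)) (nhds 0))
    -- integrability of both integrands
    (hint1 : Integrable fun x => (∑ i, v x i * s x i) * p x)
    (hint2 : Integrable fun x => vdiv v x * p x) :
    ∫ x, (∑ i, v x i * s x i) * p x = - ∫ x, vdiv v x * p x :=
  score_integration_by_parts_general p v hp hppos hv s hs hFint hdivFint hint1 hint2
end

section
/- Let T > 0, let p : [0,T] × ℝ^d → ℝ be continuously differentiable with p(t,x) > 0 for all (t,x), and let v : [0,T] × ℝ^d → ℝ^d be continuous and continuously differentiable in x. Assume the continuity equation ∂_t p(t,x) = − div_x( p(t,·) v(t,·) )(x) holds for all (t,x). Let x₀ ∈ ℝ^d and let Φ : [0,T] → ℝ^d be differentiable with Φ(0) = x₀ and Φ'(t) = v(t, Φ(t)) for all t. Then for every t ∈ [0,T], log p(t, Φ(t)) = log p(0, x₀) − ∫_0^t (div_x v(s,·))(Φ(s)) ds. -/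
/-!
Along a trajectory, `d/dt p(t, Φ t) = ∂ₜp + ∇ₓp · v`. Expanding `div(p v) = ∇p · v + p div v` in
the continuity equation, the transport term cancels and `d/dt p(t, Φ t) = -p div v`, hence
`d/dt log p(t, Φ t) = -(div v)(t, Φ t)`. This derivative is continuous, being the derivative of a
`C¹` function along a trajectory of a continuous field, so the fundamental theorem of calculus
applies.
-/

open MeasureTheory Filter Set

lemma ContinuousLinearMap.apply_eq_sum_apply_single {d : ℕ} (L : (Fin d → ℝ) →L[ℝ] ℝ)
    (w : Fin d → ℝ) : L w = ∑ i, L (Pi.single i 1) * w i := by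
  conv_lhs => rw [← Finset.univ_sum_single w, map_sum]
  refine Finset.sum_congr rfl fun i _ => ?_
  rw [mul_comm, ← smul_eq_mul, ← map_smul, ← Pi.single_smul, smul_eq_mul, mul_one]

lemma vdiv_smul_s4 {d : ℕ} {q : (Fin d → ℝ) → ℝ} {F : (Fin d → ℝ) → Fin d → ℝ} {x : Fin d → ℝ}
    (hq : DifferentiableAt ℝ q x) (hF : DifferentiableAt ℝ F x) :
    vdiv (fun y => q y • F y) x = fderiv ℝ q x (F x) + q x * vdiv F x := by
  have hprod : fderiv ℝ (fun y => q y • F y) x = _ := (hq.hasFDerivAt.smul hF.hasFDerivAt).fderiv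
  rw [vdiv, vdiv, hprod, (fderiv ℝ q x).apply_eq_sum_apply_single, Finset.mul_sum,
    ← Finset.sum_add_distrib]
  simp [add_comm]

lemma HasDerivAt.comp_prodMk_of_hasDerivAt_fst {E G : Type*} [NormedAddCommGroup E]
    [NormedSpace ℝ E] [NormedAddCommGroup G] [NormedSpace ℝ G]
    {f : ℝ × E → G} {γ : ℝ → E} {t : ℝ} {a : G} {w : E}
    (hf : DifferentiableAt ℝ f (t, γ t)) (ht : HasDerivAt (fun s => f (s, γ t)) a t)
    (hγ : HasDerivAt γ w t) :
    HasDerivAt (fun s => f (s, γ s)) (a + fderiv ℝ (fun y => f (t, y)) (γ t) w) t := by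
  set L := fderiv ℝ f (t, γ t)
  have htime : L (1, 0) = a :=
    (hf.hasFDerivAt.comp_hasDerivAt t ((hasDerivAt_id t).prodMk (hasDerivAt_const t _))).unique ht
  have hspace : fderiv ℝ (fun y => f (t, y)) (γ t) = L.comp (.inr ℝ ℝ E) :=
    (hf.hasFDerivAt.comp (γ t) (hasFDerivAt_prodMk_right t (γ t))).fderiv
  have hcurve : HasDerivAt (fun s => f (s, γ s)) (L (1, w)) t :=
    hf.hasFDerivAt.comp_hasDerivAt t ((hasDerivAt_id t).prodMk hγ)
  have hsplit : L (1, w) = L (1, 0) + L (0, w) := by rw [← map_add]; simp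
  rwa [hspace, ← htime, ContinuousLinearMap.comp_apply, ContinuousLinearMap.inr_apply, ← hsplit]

lemma continuousOn_of_hasDerivAt_comp_trajectory {E G : Type*} [NormedAddCommGroup E]
    [NormedSpace ℝ E] [NormedAddCommGroup G] [NormedSpace ℝ G]
    {f : ℝ × E → G} {V : ℝ × E → E} {γ : ℝ → E} {g : ℝ → G} {s : Set ℝ}
    (hf : ContDiff ℝ 1 f) (hV : Continuous V) (hγ : ∀ t ∈ s, HasDerivAt γ (V (t, γ t)) t)
    (hg : ∀ t ∈ s, HasDerivAt (fun u => f (u, γ u)) (g t) t) : ContinuousOn g s := by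
  have hcurve : ContinuousOn (fun t => (t, γ t)) s :=
    continuousOn_id.prodMk fun t ht => (hγ t ht).continuousAt.continuousWithinAt
  have hchain : ∀ t ∈ s, g t = fderiv ℝ f (t, γ t) (1, V (t, γ t)) := fun t ht =>
    (hg t ht).unique <| (hf.differentiable one_ne_zero _).hasFDerivAt.comp_hasDerivAt t
      ((hasDerivAt_id t).prodMk (hγ t ht))
  refine ContinuousOn.congr ?_ hchain
  exact ((hf.continuous_fderiv one_ne_zero).comp_continuousOn hcurve).clm_apply
    (continuousOn_const.prodMk (hV.comp_continuousOn hcurve))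

lemma hasDerivAt_comp_trajectory_of_continuity_equation {d : ℕ} {p : ℝ × (Fin d → ℝ) → ℝ}
    {v : ℝ × (Fin d → ℝ) → Fin d → ℝ} {Φ : ℝ → Fin d → ℝ} {t : ℝ}
    (hp : DifferentiableAt ℝ p (t, Φ t)) (hv : DifferentiableAt ℝ (fun y => v (t, y)) (Φ t))
    (hce : HasDerivAt (fun s => p (s, Φ t)) (-vdiv (fun y => p (t, y) • v (t, y)) (Φ t)) t)
    (hΦ : HasDerivAt Φ (v (t, Φ t)) t) :
    HasDerivAt (fun s => p (s, Φ s)) (-(p (t, Φ t) * vdiv (fun y => v (t, y)) (Φ t))) t := by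
  have hslice : DifferentiableAt ℝ (fun y => p (t, y)) (Φ t) :=
    (hp.hasFDerivAt.comp (Φ t) (hasFDerivAt_prodMk_right t (Φ t))).differentiableAt
  have h := hce.comp_prodMk_of_hasDerivAt_fst hp hΦ
  rw [vdiv_smul_s4 hslice hv] at h
  exact h.congr_deriv (by ring)

theorem instantaneous_change_of_variables_general {d : ℕ} (T : ℝ)
    (p : ℝ × (Fin d → ℝ) → ℝ) (v : ℝ × (Fin d → ℝ) → (Fin d → ℝ))
    -- `p` continuously differentiable and positive on `[0,T] × ℝ^d`
    (hp : ContDiff ℝ 1 p) (hppos : ∀ t ∈ Icc (0 : ℝ) T, ∀ x, 0 < p (t, x))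
    -- `v` continuous, and continuously differentiable in `x`
    (hv : Continuous v) (hvx : ∀ t ∈ Icc (0 : ℝ) T, ContDiff ℝ 1 fun x => v (t, x))
    -- the continuity equation `∂_t p = −div_x(p v)`
    (hce : ∀ t ∈ Icc (0 : ℝ) T, ∀ x,
      HasDerivAt (fun s => p (s, x)) (- vdiv (fun y => p (t, y) • v (t, y)) x) t)
    -- `Φ` is a trajectory of the velocity field `v` starting at `x₀`
    (x₀ : Fin d → ℝ) (Φ : ℝ → (Fin d → ℝ)) (hΦ0 : Φ 0 = x₀)
    (hΦ : ∀ t ∈ Icc (0 : ℝ) T, HasDerivAt Φ (v (t, Φ t)) t) :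
    ∀ t ∈ Icc (0 : ℝ) T,
      Real.log (p (t, Φ t))
        = Real.log (p (0, x₀)) - ∫ s in (0 : ℝ)..t, vdiv (fun y => v (s, y)) (Φ s) := by
  intro t ht
  have hflow : ∀ s ∈ Icc 0 T, HasDerivAt (fun u => p (u, Φ u))
      (-(p (s, Φ s) * vdiv (fun y => v (s, y)) (Φ s))) s := fun s hs =>
    hasDerivAt_comp_trajectory_of_continuity_equation (hp.differentiable one_ne_zero _)
      ((hvx s hs).differentiable one_ne_zero _) (hce s hs _) (hΦ s hs)
  have hdiv : ContinuousOn (fun s => vdiv (fun y => v (s, y)) (Φ s)) (Icc 0 T) := by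
    have hpΦ : ContinuousOn (fun s => p (s, Φ s)) (Icc 0 T) := fun s hs =>
      (hflow s hs).continuousAt.continuousWithinAt
    refine ((continuousOn_of_hasDerivAt_comp_trajectory hp hv hΦ hflow).neg.div hpΦ
      fun s hs => (hppos s hs _).ne').congr fun s hs => ?_
    simp only [Pi.neg_apply, Pi.div_apply]
    field_simp [(hppos s hs (Φ s)).ne']
  have hlog : ∀ s ∈ Icc 0 T, HasDerivAt (fun u => Real.log (p (u, Φ u)))
      (-vdiv (fun y => v (s, y)) (Φ s)) s := fun s hs => by
    convert (hflow s hs).log (hppos s hs _).ne' using 1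
    field_simp [(hppos s hs (Φ s)).ne']
  have hsub : uIcc 0 t ⊆ Icc 0 T := by
    rw [uIcc_of_le ht.1]; exact Icc_subset_Icc_right ht.2
  have hFTC := intervalIntegral.integral_eq_sub_of_hasDerivAt (fun s hs => hlog s (hsub hs))
    ((hdiv.mono hsub).neg.intervalIntegrable)
  rw [intervalIntegral.integral_neg, hΦ0] at hFTC
  linarith

/-- **Instantaneous change-of-variables formula**: along a trajectory `Φ` of the velocity
field `v` of a solution of the continuity equation,
`log p(t, Φ(t)) = log p(0, x₀) − ∫₀ᵗ (div_x v(s,·))(Φ(s)) ds`. -/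
theorem instantaneous_change_of_variables {d : ℕ} (T : ℝ) (hT : 0 < T)
    (p : ℝ × (Fin d → ℝ) → ℝ) (v : ℝ × (Fin d → ℝ) → (Fin d → ℝ))
    -- `p` continuously differentiable and positive on `[0,T] × ℝ^d`
    (hp : ContDiff ℝ 1 p) (hppos : ∀ t ∈ Icc (0 : ℝ) T, ∀ x, 0 < p (t, x))
    -- `v` continuous, and continuously differentiable in `x`
    (hv : Continuous v) (hvx : ∀ t ∈ Icc (0 : ℝ) T, ContDiff ℝ 1 fun x => v (t, x))
    -- the continuity equation `∂_t p = −div_x(p v)`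
    (hce : ∀ t ∈ Icc (0 : ℝ) T, ∀ x,
      HasDerivAt (fun s => p (s, x)) (- vdiv (fun y => p (t, y) • v (t, y)) x) t)
    -- `Φ` is a trajectory of the velocity field `v` starting at `x₀`
    (x₀ : Fin d → ℝ) (Φ : ℝ → (Fin d → ℝ)) (hΦ0 : Φ 0 = x₀)
    (hΦ : ∀ t ∈ Icc (0 : ℝ) T, HasDerivAt Φ (v (t, Φ t)) t) :
    ∀ t ∈ Icc (0 : ℝ) T,
      Real.log (p (t, Φ t))
        = Real.log (p (0, x₀)) - ∫ s in (0 : ℝ)..t, vdiv (fun y => v (s, y)) (Φ s) :=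
  instantaneous_change_of_variables_general T p v hp hppos hv hvx hce x₀ Φ hΦ0 hΦ
end
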